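/- Path replay within an intraprocedural group: if wf(ξ̃, (r̃, σ̃, σ̃κ)) and there is a finite-state path (Entry(ãκ), ψ̃') ↪̃ ((e, ρ̃, ãκ), ψ̃') (via ξ̃, (r̃, σ̃, σ̃κ)) from the entry configuration of continuation address ãκ to (e, ρ̃, ãκ) carrying some implied stack ψ̃', then for any other implied stack ψ̃ with ψ̃ ∈ψ ãκ (via σ̃κ) there is also a path (Entry(ãκ), ψ̃) ↪̃ ((e, ρ̃, ãκ), ψ̃) (via ξ̃, (r̃, σ̃, σ̃κ)) carrying ψ̃. (Inner induction in the proof of the stacks-have-paths lemma.) -/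
import Mathlib


/-!
Formalization of the P4F ("Pushdown Control-Flow Analysis for Free") framework:
ANF λ-calculus syntax, the finite-state abstract machine with store-allocated
continuations (P4F continuation allocator), the store-widened analysis, the
unbounded-stack abstract machine and its widened analysis, implied stacks,
sub-step relations, finite-state and unbounded-stack paths, well-formedness,
conversion functions induced by an address bijection, and the precision
relations.
-/

namespace P4F

/-! ANF syntax: expressions, atomic expressions, lambdas. -/
mutual
inductive Exp (Var : Type) : Type where
  | letCall (y : Var) (f : AExp Var) (ae : AExp Var) (body : Exp Var)
  | ret (ae : AExp Var)
inductive AExp (Var : Type) : Type where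
  | var (x : Var)
  | lam (l : Lam Var)
inductive Lam (Var : Type) : Type where
  | mk (x : Var) (body : Exp Var)
end

variable {Var Addr HAddr : Type}

/-- Pointwise containment of set-valued stores. -/
def SubStore {A B : Type} (σ σ' : A → Set B) : Prop := ∀ a, σ a ⊆ σ' a

open Classical in
/-- Join a set-valued store with a single-point store: `σ ⊔ [a ↦ d]`. -/
noncomputable def joinOne {A B : Type} (σ : A → Set B) (a : A) (d : Set B) : A → Set B :=
  fun a' => if a' = a then σ a' ∪ d else σ a'

/-- Binding environments: partial maps from variables to addresses. -/
abbrev EnvF (Var Addr : Type) : Type := Var → Option Addr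
/-- Abstract closures. -/
abbrev CloF (Var Addr : Type) : Type := Lam Var × EnvF Var Addr
/-- Value stores. -/
abbrev StoreF (Var Addr : Type) : Type := Addr → Set (CloF Var Addr)
/-- Stack frames. -/
abbrev FrameF (Var Addr : Type) : Type := Var × Exp Var × EnvF Var Addr
/-- Continuation addresses for the P4F allocator: either the halt address
    (`none`) or a pair of a target expression and environment. -/
abbrev KAddrF (Var Addr : Type) : Type := Option (Exp Var × EnvF Var Addr)
/-- Continuations: a topmost frame paired with the address of the rest of the stack. -/
abbrev KontF (Var Addr : Type) : Type := FrameF Var Addr × KAddrF Var Addr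
/-- Continuation stores. -/
abbrev KStoreF (Var Addr : Type) : Type := KAddrF Var Addr → Set (KontF Var Addr)

def emptyEnv : EnvF Var Addr := fun _ => none
def botStore : StoreF Var Addr := fun _ => ∅
def botKStore : KStoreF Var Addr := fun _ => ∅
/-- The distinguished halt continuation address. -/
def ahalt : KAddrF Var Addr := none

open Classical in
/-- Environment extension `ρ[x ↦ a]`. -/
noncomputable def upd (ρ : EnvF Var Addr) (x : Var) (a : Addr) : EnvF Var Addr :=
  fun y => if y = x then some a else ρ y

/-- Abstract atomic-expression evaluation. -/
def aeval : AExp Var → EnvF Var Addr → StoreF Var Addr → Set (CloF Var Addr)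
  | AExp.var x, ρ, σ =>
    match ρ x with
    | some a => σ a
    | none => ∅
  | AExp.lam l, ρ, _ => {(l, ρ)}

/-- Finite-state machine states `ς̃ = (e, ρ̃, σ̃, σ̃κ, ãκ)`. -/
structure StateF (Var Addr : Type) : Type where
  e : Exp Var
  ρ : EnvF Var Addr
  σ : StoreF Var Addr
  σκ : KStoreF Var Addr
  aκ : KAddrF Var Addr

/-- The finite-state transition relation `⤳̃Σ`, parametrized by the value
    allocator; the continuation allocator is the P4F allocator
    `alloc̃κ(ς̃, e', ρ̃', σ̃') = (e', ρ̃')`. -/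
inductive StepF (alloc : Var → StateF Var Addr → Addr) :
    StateF Var Addr → StateF Var Addr → Prop where
  | call {y x : Var} {f ae : AExp Var} {e e' : Exp Var} {ρ ρlam : EnvF Var Addr}
      {σ : StoreF Var Addr} {σκ : KStoreF Var Addr} {aκ : KAddrF Var Addr} :
      (Lam.mk x e', ρlam) ∈ aeval f ρ σ →
      StepF alloc ⟨Exp.letCall y f ae e, ρ, σ, σκ, aκ⟩
        ⟨e',
         upd ρlam x (alloc x ⟨Exp.letCall y f ae e, ρ, σ, σκ, aκ⟩),
         joinOne σ (alloc x ⟨Exp.letCall y f ae e, ρ, σ, σκ, aκ⟩) (aeval ae ρ σ),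
         joinOne σκ (some (e', upd ρlam x (alloc x ⟨Exp.letCall y f ae e, ρ, σ, σκ, aκ⟩)))
           {((y, e, ρ), aκ)},
         some (e', upd ρlam x (alloc x ⟨Exp.letCall y f ae e, ρ, σ, σκ, aκ⟩))⟩
  | ret {x : Var} {ae : AExp Var} {e : Exp Var} {ρ ρκ : EnvF Var Addr}
      {σ : StoreF Var Addr} {σκ : KStoreF Var Addr} {aκ aκ' : KAddrF Var Addr} :
      ((x, e, ρκ), aκ') ∈ σκ aκ →
      StepF alloc ⟨Exp.ret ae, ρ, σ, σκ, aκ⟩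
        ⟨e, upd ρκ x (alloc x ⟨Exp.ret ae, ρ, σ, σκ, aκ⟩),
         joinOne σ (alloc x ⟨Exp.ret ae, ρ, σ, σκ, aκ⟩) (aeval ae ρ σ),
         σκ, aκ'⟩

/-- Finite-state configurations `c̃ = (e, ρ̃, ãκ)`. -/
abbrev ConfF (Var Addr : Type) : Type := Exp Var × EnvF Var Addr × KAddrF Var Addr

/-- Widened state spaces `ξ̃ = (r̃, σ̃, σ̃κ)`. -/
structure XiF (Var Addr : Type) : Type where
  r : Set (ConfF Var Addr)
  σ : StoreF Var Addr
  σκ : KStoreF Var Addr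

def initConfF (e0 : Exp Var) : ConfF Var Addr := (e0, emptyEnv, ahalt)
def initStateF (e0 : Exp Var) : StateF Var Addr := ⟨e0, emptyEnv, botStore, botKStore, ahalt⟩
/-- The initial widened result `({(e₀, ∅, ã_halt)}, ⊥, ⊥)`. -/
def initXiF (e0 : Exp Var) : XiF Var Addr := ⟨{initConfF e0}, botStore, botKStore⟩

/-- The state obtained by pairing a configuration with the global stores. -/
def stateOfF (ξ : XiF Var Addr) (c : ConfF Var Addr) : StateF Var Addr :=
  ⟨c.1, c.2.1, ξ.σ, ξ.σκ, c.2.2⟩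

/-- The set `s̃` of all successors of the reachable configurations under the
    global stores, together with the injected initial state. -/
def succSetF (alloc : Var → StateF Var Addr → Addr) (e0 : Exp Var)
    (ξ : XiF Var Addr) : Set (StateF Var Addr) :=
  insert (initStateF e0) {ς' | ∃ c ∈ ξ.r, StepF alloc (stateOfF ξ c) ς'}

/-- The widened transfer relation `⤳̃Ξ`. -/
def XiStepF (alloc : Var → StateF Var Addr → Addr) (e0 : Exp Var)
    (ξ ξ' : XiF Var Addr) : Prop :=
  ξ'.r = {c | ∃ ς ∈ succSetF alloc e0 ξ, c = (ς.e, ς.ρ, ς.aκ)} ∧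
  ξ'.σ = (fun a => ⋃ ς ∈ succSetF alloc e0 ξ, ς.σ a) ∧
  ξ'.σκ = (fun aκ => ⋃ ς ∈ succSetF alloc e0 ξ, ς.σκ aκ)

/-- Implied stacks: `ψ̃ ∈ψ ãκ (via σ̃κ)`. -/
inductive Implied (σκ : KStoreF Var Addr) : KAddrF Var Addr → List (KontF Var Addr) → Prop where
  | halt : Implied σκ ahalt []
  | cons {φ : FrameF Var Addr} {aκ' aκ : KAddrF Var Addr} {ψ : List (KontF Var Addr)} :
      (φ, aκ') ∈ σκ aκ → Implied σκ aκ' ψ → aκ ≠ ahalt →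
      Implied σκ aκ ((φ, aκ') :: ψ)

/-- The finite-state sub-step relation `⤳⊑̃`. -/
def SubStepF (alloc : Var → StateF Var Addr → Addr) (ς ς' : StateF Var Addr) : Prop :=
  ∃ σ₁ σκ₁ σ₂ σκ₂,
    StepF alloc ⟨ς.e, ς.ρ, σ₁, σκ₁, ς.aκ⟩ ⟨ς'.e, ς'.ρ, σ₂, σκ₂, ς'.aκ⟩ ∧
    SubStore σ₁ ς.σ ∧ SubStore σκ₁ ς.σκ ∧ SubStore σ₂ ς'.σ ∧ SubStore σκ₂ ς'.σκ

/-- The finite-state sub-step relation `⤳⊑̃ (with ã, clo)`. -/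
def SubStepFWithClo (alloc : Var → StateF Var Addr → Addr) (ς ς' : StateF Var Addr)
    (a : Addr) (clo : CloF Var Addr) : Prop :=
  ∃ σ₁ σκ₁ σ₂ σκ₂,
    StepF alloc ⟨ς.e, ς.ρ, σ₁, σκ₁, ς.aκ⟩ ⟨ς'.e, ς'.ρ, σ₂, σκ₂, ς'.aκ⟩ ∧
    SubStore σ₁ ς.σ ∧ SubStore σκ₁ ς.σκ ∧ SubStore σ₂ ς'.σ ∧ SubStore σκ₂ ς'.σκ ∧
    clo ∈ σ₂ a

/-- The finite-state sub-step relation `⤳⊑̃ (with κ̃, ã''κ)`. -/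
def SubStepFWithKont (alloc : Var → StateF Var Addr → Addr) (ς ς' : StateF Var Addr)
    (aκ'' : KAddrF Var Addr) (κ : KontF Var Addr) : Prop :=
  ∃ σ₁ σκ₁ σ₂ σκ₂,
    StepF alloc ⟨ς.e, ς.ρ, σ₁, σκ₁, ς.aκ⟩ ⟨ς'.e, ς'.ρ, σ₂, σκ₂, ς'.aκ⟩ ∧
    SubStore σ₁ ς.σ ∧ SubStore σκ₁ ς.σκ ∧ SubStore σ₂ ς'.σ ∧ SubStore σκ₂ ς'.σκ ∧
    κ ∈ σκ₂ aκ''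

/-- Finite-state paths `(c̃, ψ̃) ↪̃ (c̃', ψ̃') (via ξ̃, ξ̃')`. -/
inductive PathF (alloc : Var → StateF Var Addr → Addr) (ξ ξ' : XiF Var Addr) :
    ConfF Var Addr × List (KontF Var Addr) →
    ConfF Var Addr × List (KontF Var Addr) → Prop where
  | refl {e : Exp Var} {ρ : EnvF Var Addr} {aκ : KAddrF Var Addr}
      {ψ : List (KontF Var Addr)} :
      (e, ρ, aκ) ∈ ξ'.r → Implied ξ'.σκ aκ ψ →
      PathF alloc ξ ξ' ((e, ρ, aκ), ψ) ((e, ρ, aκ), ψ)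
  | ret {c : ConfF Var Addr} {ψ₀ : List (KontF Var Addr)} {ae : AExp Var}
      {ρ'' ρκ : EnvF Var Addr} {aκ'' aκ' : KAddrF Var Addr} {x : Var} {e' : Exp Var}
      {ψ' : List (KontF Var Addr)} :
      PathF alloc ξ ξ' (c, ψ₀) ((Exp.ret ae, ρ'', aκ''), ((x, e', ρκ), aκ') :: ψ') →
      (Exp.ret ae, ρ'', aκ'') ∈ ξ.r →
      ((x, e', ρκ), aκ') ∈ ξ.σκ aκ'' →
      (e', upd ρκ x (alloc x ⟨Exp.ret ae, ρ'', ξ.σ, ξ.σκ, aκ''⟩), aκ') ∈ ξ'.r →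
      SubStepF alloc ⟨Exp.ret ae, ρ'', ξ.σ, ξ.σκ, aκ''⟩
        ⟨e', upd ρκ x (alloc x ⟨Exp.ret ae, ρ'', ξ.σ, ξ.σκ, aκ''⟩), ξ'.σ, ξ'.σκ, aκ'⟩ →
      PathF alloc ξ ξ' (c, ψ₀)
        ((e', upd ρκ x (alloc x ⟨Exp.ret ae, ρ'', ξ.σ, ξ.σκ, aκ''⟩), aκ'), ψ')
  | call {c : ConfF Var Addr} {ψ₀ : List (KontF Var Addr)} {x : Var}
      {f ae : AExp Var} {e'' e' : Exp Var} {ρ'' ρ' : EnvF Var Addr}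
      {aκ'' aκ' : KAddrF Var Addr} {ψ' : List (KontF Var Addr)} :
      PathF alloc ξ ξ' (c, ψ₀) ((Exp.letCall x f ae e'', ρ'', aκ''), ψ') →
      ((x, e'', ρ''), aκ'') ∈ ξ'.σκ aκ' →
      SubStepF alloc ⟨Exp.letCall x f ae e'', ρ'', ξ.σ, ξ.σκ, aκ''⟩
        ⟨e', ρ', ξ'.σ, ξ'.σκ, aκ'⟩ →
      PathF alloc ξ ξ' (c, ψ₀) ((e', ρ', aκ'), ((x, e'', ρ''), aκ'') :: ψ')

/-- `Entry` maps a continuation address to the entry-point configuration of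
    the function invocation whose configurations use that address. -/
def Entry (e0 : Exp Var) : KAddrF Var Addr → ConfF Var Addr
  | none => (e0, emptyEnv, ahalt)
  | some (eκ, ρκ) => (eκ, ρκ, some (eκ, ρκ))

/-- The non-recursive well-formedness sub-properties
    `wf_⊑ ∧ wf_init ∧ wf_halt ∧ wf_r̃ ∧ wf_σ̃ ∧ wf_σ̃κ`. -/
def WFRest (alloc : Var → StateF Var Addr → Addr) (e0 : Exp Var)
    (ξ ξ' : XiF Var Addr) : Prop :=
  (ξ.r ⊆ ξ'.r ∧ SubStore ξ.σ ξ'.σ ∧ SubStore ξ.σκ ξ'.σκ) ∧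
  (initConfF e0 ∈ ξ'.r) ∧
  (∀ κ : KontF Var Addr, κ ∉ ξ'.σκ ahalt) ∧
  (∀ c ∈ ξ'.r, ∃ ψ, Implied ξ'.σκ c.2.2 ψ ∧
      PathF alloc ξ ξ' (initConfF e0, []) (c, ψ)) ∧
  (∀ (a : Addr) (clo : CloF Var Addr), clo ∈ ξ'.σ a →
      ∃ c ∈ ξ.r, ∃ c' ∈ ξ'.r,
        SubStepFWithClo alloc (stateOfF ξ c) (stateOfF ξ' c') a clo) ∧
  (∀ (aκ' : KAddrF Var Addr) (x : Var) (e : Exp Var) (ρκ : EnvF Var Addr)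
      (aκ : KAddrF Var Addr), ((x, e, ρκ), aκ) ∈ ξ'.σκ aκ' →
      ∃ (eκ' : Exp Var) (ρκ' : EnvF Var Addr), aκ' = some (eκ', ρκ') ∧
        Entry e0 aκ' ∈ ξ'.r ∧
        ∃ (f ae : AExp Var), (Exp.letCall x f ae e, ρκ, aκ) ∈ ξ.r ∧
          SubStepFWithKont alloc ⟨Exp.letCall x f ae e, ρκ, ξ.σ, ξ.σκ, aκ⟩
            ⟨eκ', ρκ', ξ'.σ, ξ'.σκ, aκ'⟩ aκ' ((x, e, ρκ), aκ))

/-- Well-formedness `wf(ξ̃, ξ̃')`. -/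
inductive WF (alloc : Var → StateF Var Addr → Addr) (e0 : Exp Var) :
    XiF Var Addr → XiF Var Addr → Prop where
  | init :
      WFRest alloc e0 (initXiF e0) (initXiF e0) →
      WF alloc e0 (initXiF e0) (initXiF e0)
  | step {ξ'' ξ ξ' : XiF Var Addr} :
      WF alloc e0 ξ'' ξ → XiStepF alloc e0 ξ ξ' → WFRest alloc e0 ξ ξ' →
      WF alloc e0 ξ ξ'

/-! ### The unbounded-stack machine -/

/-- Unbounded-stack machine states `ς̂ = (e, ρ̂, σ̂, κ̂)`. -/
structure StateH (Var HAddr : Type) : Type where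
  e : Exp Var
  ρ : EnvF Var HAddr
  σ : StoreF Var HAddr
  κ : List (FrameF Var HAddr)

/-- The unbounded-stack transition relation `⤳̂Σ`. -/
inductive StepH (halloc : Var → StateH Var HAddr → HAddr) :
    StateH Var HAddr → StateH Var HAddr → Prop where
  | call {y x : Var} {f ae : AExp Var} {e e' : Exp Var} {ρ ρlam : EnvF Var HAddr}
      {σ : StoreF Var HAddr} {κ : List (FrameF Var HAddr)} :
      (Lam.mk x e', ρlam) ∈ aeval f ρ σ →
      StepH halloc ⟨Exp.letCall y f ae e, ρ, σ, κ⟩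
        ⟨e', upd ρlam x (halloc x ⟨Exp.letCall y f ae e, ρ, σ, κ⟩),
         joinOne σ (halloc x ⟨Exp.letCall y f ae e, ρ, σ, κ⟩) (aeval ae ρ σ),
         (y, e, ρ) :: κ⟩
  | ret {x : Var} {ae : AExp Var} {e : Exp Var} {ρ ρκ : EnvF Var HAddr}
      {σ : StoreF Var HAddr} {κ : List (FrameF Var HAddr)} :
      StepH halloc ⟨Exp.ret ae, ρ, σ, (x, e, ρκ) :: κ⟩
        ⟨e, upd ρκ x (halloc x ⟨Exp.ret ae, ρ, σ, (x, e, ρκ) :: κ⟩),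
         joinOne σ (halloc x ⟨Exp.ret ae, ρ, σ, (x, e, ρκ) :: κ⟩) (aeval ae ρ σ),
         κ⟩

/-- Unbounded-stack configurations `ĉ = (e, ρ̂, κ̂)`. -/
abbrev ConfH (Var HAddr : Type) : Type := Exp Var × EnvF Var HAddr × List (FrameF Var HAddr)

/-- Unbounded-stack widened state spaces `ξ̂ = (r̂, σ̂)`. -/
structure XiH (Var HAddr : Type) : Type where
  r : Set (ConfH Var HAddr)
  σ : StoreF Var HAddr

def initConfH (e0 : Exp Var) : ConfH Var HAddr := (e0, emptyEnv, [])
def initStateH (e0 : Exp Var) : StateH Var HAddr := ⟨e0, emptyEnv, botStore, []⟩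

def succSetH (halloc : Var → StateH Var HAddr → HAddr) (e0 : Exp Var)
    (ξ : XiH Var HAddr) : Set (StateH Var HAddr) :=
  insert (initStateH e0) {ς' | ∃ c ∈ ξ.r, StepH halloc ⟨c.1, c.2.1, ξ.σ, c.2.2⟩ ς'}

/-- The unbounded-stack widened transfer relation `⤳̂Ξ`. -/
def XiStepH (halloc : Var → StateH Var HAddr → HAddr) (e0 : Exp Var)
    (ξ ξ' : XiH Var HAddr) : Prop :=
  ξ'.r = {c | ∃ ς ∈ succSetH halloc e0 ξ, c = (ς.e, ς.ρ, ς.κ)} ∧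
  ξ'.σ = (fun a => ⋃ ς ∈ succSetH halloc e0 ξ, ς.σ a)

/-- The unbounded-stack sub-step relation `⤳⊑̂`. -/
def SubStepH (halloc : Var → StateH Var HAddr → HAddr) (ς ς' : StateH Var HAddr) : Prop :=
  ∃ σ₂, StepH halloc ⟨ς.e, ς.ρ, ς.σ, ς.κ⟩ ⟨ς'.e, ς'.ρ, σ₂, ς'.κ⟩ ∧ SubStore σ₂ ς'.σ

/-- Unbounded-stack paths `ĉ ↪̂ ĉ' (via r̂, σ̂)`. -/
inductive PathH (halloc : Var → StateH Var HAddr → HAddr)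
    (rH : Set (ConfH Var HAddr)) (σH : StoreF Var HAddr) :
    ConfH Var HAddr → ConfH Var HAddr → Prop where
  | refl (c : ConfH Var HAddr) : PathH halloc rH σH c c
  | step {c c' : ConfH Var HAddr} {e' : Exp Var} {ρ' : EnvF Var HAddr}
      {κ' : List (FrameF Var HAddr)} :
      PathH halloc rH σH c c' →
      SubStepH halloc ⟨c'.1, c'.2.1, σH, c'.2.2⟩ ⟨e', ρ', σH, κ'⟩ →
      PathH halloc rH σH c (e', ρ', κ')

/-! ### Conversions and precision relations (Assumption 1) -/

/-- `H_Env` induced by the address bijection. -/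
def HEnv (HA : Addr ≃ HAddr) (ρ : EnvF Var Addr) : EnvF Var HAddr :=
  fun x => (ρ x).map HA

/-- `H_Clo`. -/
def HClo (HA : Addr ≃ HAddr) (clo : CloF Var Addr) : CloF Var HAddr :=
  (clo.1, HEnv HA clo.2)

/-- `H_Frame`. -/
def HFrame (HA : Addr ≃ HAddr) (φ : FrameF Var Addr) : FrameF Var HAddr :=
  (φ.1, φ.2.1, HEnv HA φ.2.2)

/-- `H_Kont`: componentwise conversion of an implied stack into an unbounded stack. -/
def HKont (HA : Addr ≃ HAddr) (ψ : List (KontF Var Addr)) : List (FrameF Var HAddr) :=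
  ψ.map fun k => HFrame HA k.1

/-- `H_C`: conversion of a finite-state configuration with an implied stack
    into an unbounded-stack configuration. -/
def HC (HA : Addr ≃ HAddr) (c : ConfF Var Addr) (ψ : List (KontF Var Addr)) :
    ConfH Var HAddr :=
  (c.1, HEnv HA c.2.1, HKont HA ψ)

/-- Store precision `σ̂ ⊒Store σ̃`. -/
def StorePrec (HA : Addr ≃ HAddr) (σH : StoreF Var HAddr) (σ : StoreF Var Addr) : Prop :=
  ∀ (a : Addr) (clo : CloF Var Addr), clo ∈ σ a → HClo HA clo ∈ σH (HA a)

/-- Reachable-configurations precision `r̂ ⊒R r̃ (via σ̃κ)`. -/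
def RPrec (HA : Addr ≃ HAddr) (rH : Set (ConfH Var HAddr))
    (r : Set (ConfF Var Addr)) (σκ : KStoreF Var Addr) : Prop :=
  ∀ (e : Exp Var) (ρ : EnvF Var Addr) (aκ : KAddrF Var Addr)
    (ψ : List (KontF Var Addr)),
    (e, ρ, aκ) ∈ r → Implied σκ aκ ψ → (e, HEnv HA ρ, HKont HA ψ) ∈ rH

/-- State-space precision `ξ̂ ⊒Ξ ξ̃`. -/
def XiPrec (HA : Addr ≃ HAddr) (ξH : XiH Var HAddr) (ξ : XiF Var Addr) : Prop :=
  RPrec HA ξH.r ξ.r ξ.σκ ∧ StorePrec HA ξH.σ ξ.σ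

/-- Assumption 2 (allocation equivalence). -/
def AllocEquiv (HA : Addr ≃ HAddr) (alloc : Var → StateF Var Addr → Addr)
    (halloc : Var → StateH Var HAddr → HAddr) : Prop :=
  ∀ (x : Var) (e : Exp Var) (ρ : EnvF Var Addr) (σ : StoreF Var Addr)
    (σκ : KStoreF Var Addr) (aκ : KAddrF Var Addr) (σH : StoreF Var HAddr)
    (ψ : List (KontF Var Addr)),
    StorePrec HA σH σ → Implied σκ aκ ψ →
    halloc x ⟨e, HEnv HA ρ, σH, HKont HA ψ⟩ = HA (alloc x ⟨e, ρ, σ, σκ, aκ⟩)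

/-- Assumption 3 (allocation consistency). -/
def AllocConsistent (alloc : Var → StateF Var Addr → Addr) (e0 : Exp Var) : Prop :=
  ∀ (ξp ξ ξ' : XiF Var Addr) (e e' : Exp Var) (ρ ρ' : EnvF Var Addr)
    (aκ aκ' : KAddrF Var Addr) (σ'' : StoreF Var Addr) (σκ'' : KStoreF Var Addr)
    (x : Var),
    WF alloc e0 ξp ξ →
    StepF alloc ⟨e, ρ, ξ.σ, ξ.σκ, aκ⟩
      ⟨e', upd ρ' x (alloc x ⟨e, ρ, ξ.σ, ξ.σκ, aκ⟩), σ'', σκ'', aκ'⟩ →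
    XiStepF alloc e0 ξ ξ' →
    alloc x ⟨e, ρ, ξ.σ, ξ.σκ, aκ⟩ = alloc x ⟨e, ρ, ξ'.σ, ξ'.σκ, aκ⟩

end P4F

namespace P4F

/-- The bottom-most kont pushed above the fixed suffix records `aκ0`
    (when the above-suffix part is empty, the current address is `aκ0`). -/
def ChainA {Var Addr : Type} (aκ0 : KAddrF Var Addr) :
    List (KontF Var Addr) → KAddrF Var Addr → Prop
  | [], a => a = aκ0
  | k :: rest, _ => ChainA aκ0 rest k.2

theorem WF.rest {Var Addr : Type} {alloc : Var → StateF Var Addr → Addr}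
    {e0 : Exp Var} {ξ ξ' : XiF Var Addr} (h : WF alloc e0 ξ ξ') :
    WFRest alloc e0 ξ ξ' := by
  cases h with
  | init h => exact h
  | step _ _ h => exact h

theorem stepF_call_aκ {Var Addr : Type} {alloc : Var → StateF Var Addr → Addr}
    {x : Var} {f ae : AExp Var} {e e' : Exp Var} {ρ ρ' : EnvF Var Addr}
    {σ₁ σ₂ : StoreF Var Addr} {σκ₁ σκ₂ : KStoreF Var Addr} {aκ aκ' : KAddrF Var Addr}
    (h : StepF alloc ⟨Exp.letCall x f ae e, ρ, σ₁, σκ₁, aκ⟩ ⟨e', ρ', σ₂, σκ₂, aκ'⟩) :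
    aκ' = some (e', ρ') := by
  cases h
  rfl

theorem entry_addr {Var Addr : Type} (e0 : Exp Var) (a : KAddrF Var Addr) :
    (Entry e0 a).2.2 = a := by
  cases a with
  | none => rfl
  | some p => rcases p with ⟨e, ρ⟩; rfl

/-- **Path replay within an intraprocedural group** (inner induction of the
stacks-have-paths lemma): a path from the entry configuration `Entry(ãκ)` to
`(e, ρ̃, ãκ)` carrying some implied stack `ψ̃'` can be replayed carrying any
other implied stack `ψ̃ ∈ψ ãκ (via σ̃κ)`. -/
theorem path_replay
    {Var Addr : Type} (e0 : Exp Var) (alloc : Var → StateF Var Addr → Addr)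
    (ξ : XiF Var Addr) (r : Set (ConfF Var Addr)) (σ : StoreF Var Addr)
    (σκ : KStoreF Var Addr)
    (hwf : WF alloc e0 ξ ⟨r, σ, σκ⟩)
    (e : Exp Var) (ρ : EnvF Var Addr) (aκ : KAddrF Var Addr)
    (ψ' : List (KontF Var Addr))
    (hψ' : Implied σκ aκ ψ')
    (hpath : PathF alloc ξ ⟨r, σ, σκ⟩ (Entry e0 aκ, ψ') ((e, ρ, aκ), ψ')) :
    ∀ ψ : List (KontF Var Addr), Implied σκ aκ ψ →
      PathF alloc ξ ⟨r, σ, σκ⟩ (Entry e0 aκ, ψ) ((e, ρ, aκ), ψ) := by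
  -- extract the wf_σκ component of well-formedness
  have hwfσκ : ∀ (aκ' : KAddrF Var Addr) (x : Var) (e₁ : Exp Var) (ρκ : EnvF Var Addr)
      (aκ₁ : KAddrF Var Addr), ((x, e₁, ρκ), aκ₁) ∈ σκ aκ' → Entry e0 aκ' ∈ r := by
    intro aκ' x e₁ ρκ aκ₁ hmem
    obtain ⟨_, _, _, _, _, h6⟩ := hwf.rest
    obtain ⟨_, _, _, hE, _⟩ := h6 aκ' x e₁ ρκ aκ₁ hmem
    exact hE
  suffices H : ∀ (s p : ConfF Var Addr × List (KontF Var Addr)),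
      PathF alloc ξ ⟨r, σ, σκ⟩ s p → s = (Entry e0 aκ, ψ') →
      ((∃ ψ₂, p.2 = ψ₂ ++ ψ' ∧ ChainA aκ ψ₂ p.1.2.2 ∧
         ∀ ψ : List (KontF Var Addr), Implied σκ aκ ψ →
           PathF alloc ξ ⟨r, σ, σκ⟩ (Entry e0 aκ, ψ) (p.1, ψ₂ ++ ψ)) ∨
       (∀ ψ₂, p.2 = ψ₂ ++ ψ' → ¬ ChainA aκ ψ₂ p.1.2.2)) by
    intro ψ hψ
    rcases H _ _ hpath rfl with ⟨ψ₂, heq, _, hrep⟩ | hB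
    · have hnil : ψ₂ = [] := by
        have hl := congrArg List.length heq
        simp only [List.length_append] at hl
        have : ψ₂.length = 0 := by omega
        exact List.length_eq_zero_iff.mp this
      subst hnil
      simpa using hrep ψ hψ
    · exact absurd rfl (hB [] rfl)
  intro s p hp
  induction hp with
  | @refl e₁ ρ₁ aκ₁ ψ₁ hr himp =>
    intro hs
    rw [Prod.mk.injEq] at hs
    obtain ⟨h1, h2⟩ := hs
    subst h2
    have ha : aκ₁ = aκ := by
      have := congrArg (fun c : ConfF Var Addr => c.2.2) h1
      simpa [entry_addr] using this
    subst ha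
    refine Or.inl ⟨[], rfl, rfl, ?_⟩
    intro ψ hψ
    rw [← h1]
    exact PathF.refl hr hψ
  | @ret c₀ ψ₀ ae ρ'' ρκ aκ'' aκ' x₁ e₁' ψt hprev hret hk hr' hsub ih =>
    intro hs
    rcases ih hs with ⟨ψ₂, heq, hch, hrep⟩ | hB
    · cases ψ₂ with
      | nil =>
        simp only [List.nil_append] at heq
        -- heq : ((x₁,e₁',ρκ),aκ') :: ψt = ψ'
        refine Or.inr ?_
        intro ψ₃ h3 _
        rw [← heq] at h3
        have hl := congrArg List.length h3
        simp only [List.length_append, List.length_cons] at hl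
        omega
      | cons k rest =>
        rw [List.cons_append] at heq
        injection heq with h1 h2
        subst h1
        refine Or.inl ⟨rest, h2, hch, ?_⟩
        intro ψ hψ
        exact PathF.ret (hrep ψ hψ) hret hk hr' hsub
    · refine Or.inr ?_
      intro ψ₃ h3 hcha
      exact hB (((x₁, e₁', ρκ), aκ') :: ψ₃)
        (by exact congrArg (List.cons ((x₁, e₁', ρκ), aκ')) h3) hcha
  | @call c₀ ψ₀ x₁ f ae e'' e₁' ρ'' ρ₁' aκ'' aκ' ψt hprev hk hsub ih =>
    intro hs
    rcases ih hs with ⟨ψ₂, heq, hch, hrep⟩ | hB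
    · refine Or.inl ⟨((x₁, e'', ρ''), aκ'') :: ψ₂,
        by exact congrArg (List.cons ((x₁, e'', ρ''), aκ'')) heq, hch, ?_⟩
      intro ψ hψ
      exact PathF.call (hrep ψ hψ) hk hsub
    · by_cases hc : ∃ ψ₂, ((x₁, e'', ρ''), aκ'') :: ψt = ψ₂ ++ ψ' ∧ ChainA aκ ψ₂ aκ'
      · obtain ⟨ψ₂, h2, hch⟩ := hc
        cases ψ₂ with
        | nil =>
          simp only [List.nil_append] at h2
          have haa : aκ' = aκ := hch
          obtain ⟨σ₁, σκ₁, σ₂, σκ₂, hstep, -⟩ := hsub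
          have hsk : aκ' = some (e₁', ρ₁') := stepF_call_aκ hstep
          have hmem : (e₁', ρ₁', aκ') ∈ r := by
            have hE := hwfσκ _ _ _ _ _ hk
            rw [hsk] at hE ⊢
            exact hE
          refine Or.inl ⟨[], by simpa using h2, haa, ?_⟩
          intro ψ₄ hψ₄
          rw [← haa, hsk] at hψ₄
          rw [hsk] at hmem
          rw [← haa, hsk]
          show PathF alloc ξ ⟨r, σ, σκ⟩ ((e₁', ρ₁', some (e₁', ρ₁')), ψ₄)
            ((e₁', ρ₁', some (e₁', ρ₁')), ψ₄)
          exact PathF.refl hmem hψ₄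
        | cons k rest =>
          rw [List.cons_append] at h2
          injection h2 with h21 h22
          subst h21
          exact absurd hch (hB rest h22)
      · refine Or.inr ?_
        intro ψ₃ h3 hcha
        exact hc ⟨ψ₃, h3, hcha⟩

end P4F
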